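/- (Lower bound on RLL redundancy.) Let Q > R ≥ 1, ℓ ≥ 1, and n ≥ 2ℓ be integers, Σ a finite alphabet with |Σ| = Q, and Σ' ⊆ Σ with |Σ'| = R. Then the redundancy of the composite run-length-limited code satisfies red(RLL_{Q,R}(ℓ,n)) ≥ log_Q(e) · (R/Q)^ℓ · (1 − R/Q) · (n − 2ℓ)/2. -/

import Mathlib

open Finset Real

/-!
Cutting an `ℓ`-RLL word of length `n` into `k = ⌊n / 2ℓ⌋` blocks of length `2ℓ` and a tail
gives `|RLL(n)| ≤ |RLL(2ℓ)| ^ k * Q ^ (n mod 2ℓ)`. In a block of length `2ℓ`, the `ℓ` events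
"positions `i, …, i + ℓ - 1` lie in `Σ'` and position `i + ℓ` does not" (`i < ℓ`) are pairwise
disjoint, each contains `Q ^ 2ℓ * p ^ ℓ * (1 - p)` words (`p = R / Q`) and none of them meets
`RLL(2ℓ)`. Hence `|RLL(2ℓ)| ≤ Q ^ 2ℓ * (1 - ℓ p ^ ℓ (1 - p)) ≤ Q ^ 2ℓ * exp (-ℓ p ^ ℓ (1 - p))`,
and taking `log_Q` with `ℓ k ≥ (n - 2ℓ) / 2` gives the bound.
-/

/-- A sequence `x ∈ Σⁿ` is `ℓ`-run-length-limited if every window of `ℓ`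
consecutive symbols contains at least one symbol outside `S'`. -/
def IsRLL {σ : Type*} (S' : Finset σ) (ℓ : ℕ) {n : ℕ} (x : Fin n → σ) : Prop :=
  ∀ i : ℕ, (h : i + ℓ ≤ n) → ∃ k : ℕ, ∃ hk : k < ℓ, x ⟨i + k, by omega⟩ ∉ S'

section

variable {σ : Type*} {S' : Finset σ} {ℓ : ℕ}

lemma IsRLL.comp_shift {n m : ℕ} {x : Fin n → σ} (hx : IsRLL S' ℓ x) (f : Fin m → Fin n)
    (c : ℕ) (hf : ∀ t, (f t : ℕ) = c + t) (hcm : c + m ≤ n) : IsRLL S' ℓ (x ∘ f) := by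
  intro i hi
  obtain ⟨k, hk, hx⟩ := hx (c + i) (by omega)
  refine ⟨k, hk, ?_⟩
  have hfik : f ⟨i + k, by omega⟩ = ⟨c + i + k, by omega⟩ := Fin.ext (by rw [hf]; simp; omega)
  simpa [hfik] using hx

lemma isRLL_const {n : ℕ} (hℓ : 0 < ℓ) {a : σ} (ha : a ∉ S') :
    IsRLL S' ℓ (fun _ : Fin n => a) :=
  fun _ _ => ⟨0, hℓ, ha⟩

variable (S' ℓ) in
noncomputable def rllCount (n : ℕ) : ℕ := Nat.card {x : Fin n → σ // IsRLL S' ℓ x}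

section Count

variable [Fintype σ]

lemma rllCount_pos {n : ℕ} (hℓ : 0 < ℓ) {a : σ} (ha : a ∉ S') : 0 < rllCount S' ℓ n :=
  have : Nonempty {x : Fin n → σ // IsRLL S' ℓ x} := ⟨⟨_, isRLL_const hℓ ha⟩⟩
  Nat.card_pos

lemma rllCount_le_card_pow (n : ℕ) : rllCount S' ℓ n ≤ Fintype.card σ ^ n := by
  calc rllCount S' ℓ n ≤ Nat.card (Fin n → σ) := Finite.card_subtype_le _
    _ = Fintype.card σ ^ n := by simp [Nat.card_eq_fintype_card]

lemma rllCount_add_le (a b : ℕ) :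
    rllCount S' ℓ (a + b) ≤ rllCount S' ℓ a * rllCount S' ℓ b := by
  rw [rllCount, rllCount, rllCount, ← Nat.card_prod]
  refine Nat.card_le_card_of_injective
    (fun x => (⟨x.1 ∘ Fin.castAdd b, x.2.comp_shift _ 0 (by simp) (by omega)⟩,
      ⟨x.1 ∘ Fin.natAdd a, x.2.comp_shift _ a (fun _ => rfl) le_rfl⟩)) ?_
  rintro ⟨x, _⟩ ⟨y, _⟩ hxy
  simp only [Prod.mk.injEq, Subtype.mk.injEq] at hxy
  rw [Subtype.mk.injEq, ← Fin.append_castAdd_natAdd (f := x), ← Fin.append_castAdd_natAdd (f := y)]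
  exact congrArg₂ Fin.append hxy.1 hxy.2

lemma rllCount_mul_add_le (m k r : ℕ) :
    rllCount S' ℓ (m * k + r) ≤ rllCount S' ℓ m ^ k * Fintype.card σ ^ r := by
  induction k with
  | zero => simpa using rllCount_le_card_pow r
  | succ k ih =>
    calc rllCount S' ℓ (m * (k + 1) + r) = rllCount S' ℓ (m + (m * k + r)) := by ring_nf
      _ ≤ rllCount S' ℓ m * (rllCount S' ℓ m ^ k * Fintype.card σ ^ r) :=
        (rllCount_add_le m _).trans (Nat.mul_le_mul_left _ ih)
      _ = rllCount S' ℓ m ^ (k + 1) * Fintype.card σ ^ r := by ring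

end Count

section TerminatedRun

variable [Fintype σ] [DecidableEq σ]

variable (S' ℓ) in
def runPattern (i t : ℕ) : Finset σ :=
  if i ≤ t ∧ t < i + ℓ then S' else if t = i + ℓ then S'ᶜ else univ

variable (S' ℓ) in
def terminatedRun (m i : ℕ) : Finset (Fin m → σ) :=
  Fintype.piFinset fun t => runPattern S' ℓ i t

lemma card_terminatedRun {m i : ℕ} (h : i + ℓ < m) :
    #(terminatedRun S' ℓ m i) =
      Fintype.card σ ^ (m - ℓ - 1) * #S' ^ ℓ * (Fintype.card σ - #S') := by
  obtain ⟨j, rfl⟩ : ∃ j, m = i + (ℓ + (1 + j)) := ⟨m - i - ℓ - 1, by omega⟩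
  have before : ∀ t ∈ range i, #(runPattern S' ℓ i t) = Fintype.card σ := fun t ht => by
    rw [runPattern, if_neg (by simp at ht; omega), if_neg (by simp at ht; omega), card_univ]
  have inside : ∀ t ∈ range ℓ, #(runPattern S' ℓ i (i + t)) = #S' := fun t ht => by
    rw [runPattern, if_pos (by simp at ht; omega)]
  have after : ∀ t ∈ range j, #(runPattern S' ℓ i (i + (ℓ + (1 + t)))) = Fintype.card σ :=
    fun t _ => by rw [runPattern, if_neg (by omega), if_neg (by omega), card_univ]
  rw [terminatedRun, Fintype.card_piFinset,
    Fin.prod_univ_eq_prod_range (fun t => #(runPattern S' ℓ i t)), prod_range_add,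
    prod_range_add, prod_range_add, prod_range_one, prod_eq_pow_card before,
    prod_eq_pow_card inside, prod_eq_pow_card after, runPattern,
    if_neg (by omega), if_pos (by omega), card_compl]
  simp only [card_range, show i + (ℓ + (1 + j)) - ℓ - 1 = i + j by omega, pow_add]
  ring

lemma not_isRLL_of_mem_terminatedRun {m i : ℕ} (h : i + ℓ ≤ m) {x : Fin m → σ}
    (hx : x ∈ terminatedRun S' ℓ m i) : ¬ IsRLL S' ℓ x := fun hrll => by
  obtain ⟨k, hk, hxk⟩ := hrll i h
  have := Fintype.mem_piFinset.1 hx ⟨i + k, by omega⟩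
  rw [runPattern, if_pos (by simp; omega)] at this
  exact hxk this

/-- The run starting at `j` covers position `i + ℓ`, where the run starting at `i` is
terminated. -/
lemma disjoint_terminatedRun {m i j : ℕ} (hij : i < j) (hji : j ≤ i + ℓ) (h : i + ℓ < m) :
    Disjoint (terminatedRun S' ℓ m i) (terminatedRun S' ℓ m j) := by
  refine disjoint_left.2 fun x hxi hxj => ?_
  have hi := Fintype.mem_piFinset.1 hxi ⟨i + ℓ, h⟩
  have hj := Fintype.mem_piFinset.1 hxj ⟨i + ℓ, h⟩
  rw [runPattern, if_neg (by simp), if_pos rfl, mem_compl] at hi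
  rw [runPattern, if_pos (by simp; omega)] at hj
  exact hi hj

lemma rllCount_two_mul_add_le :
    rllCount S' ℓ (2 * ℓ) + ℓ * (Fintype.card σ ^ (ℓ - 1) * #S' ^ ℓ * (Fintype.card σ - #S'))
      ≤ Fintype.card σ ^ (2 * ℓ) := by
  classical
  let A : Finset (Fin (2 * ℓ) → σ) := {x | IsRLL S' ℓ x}
  let U := (range ℓ).biUnion (terminatedRun S' ℓ (2 * ℓ))
  have hA : rllCount S' ℓ (2 * ℓ) = #A := by
    rw [rllCount, Nat.card_eq_fintype_card, Fintype.card_subtype]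
  have hU : #U = ℓ * (Fintype.card σ ^ (ℓ - 1) * #S' ^ ℓ * (Fintype.card σ - #S')) := by
    rw [card_biUnion, sum_congr rfl fun i hi => card_terminatedRun (by simp at hi; omega)]
    · simp [show 2 * ℓ - ℓ - 1 = ℓ - 1 by omega]
    · intro i hi j hj hij
      simp only [coe_range, Set.mem_Iio] at hi hj
      rcases hij.lt_or_gt with h | h
      · exact disjoint_terminatedRun h (by omega) (by omega)
      · exact (disjoint_terminatedRun h (by omega) (by omega)).symm
  have hAU : Disjoint A U := disjoint_left.2 fun x hxA hxU => by
    obtain ⟨i, hi, hx⟩ := mem_biUnion.1 hxU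
    exact not_isRLL_of_mem_terminatedRun (by simp at hi; omega) hx (mem_filter.1 hxA).2
  calc rllCount S' ℓ (2 * ℓ) + ℓ * (Fintype.card σ ^ (ℓ - 1) * #S' ^ ℓ * (Fintype.card σ - #S'))
      = #(A ∪ U) := by rw [card_union_of_disjoint hAU, hA, hU]
    _ ≤ Fintype.card σ ^ (2 * ℓ) := by
      simpa using card_le_univ (A ∪ U)

end TerminatedRun

section Exponential

variable [Fintype σ] {Q R : ℕ}

lemma rllCount_two_mul_le_exp (hℓ : 0 < ℓ) (hQ : 0 < Q) (hσ : Fintype.card σ = Q)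
    (hS' : #S' = R) :
    (rllCount S' ℓ (2 * ℓ) : ℝ) ≤
      Q ^ (2 * ℓ) * exp (-(ℓ * (((R : ℝ) / Q) ^ ℓ * (1 - (R : ℝ) / Q)))) := by
  classical
  have hRQ : R ≤ Q := hσ ▸ hS' ▸ card_le_univ S'
  have hcount := rllCount_two_mul_add_le (S' := S') (ℓ := ℓ)
  rw [hσ, hS'] at hcount
  have hcast : ((ℓ * (Q ^ (ℓ - 1) * R ^ ℓ * (Q - R)) : ℕ) : ℝ) =
      Q ^ (2 * ℓ) * (ℓ * (((R : ℝ) / Q) ^ ℓ * (1 - (R : ℝ) / Q))) := by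
    obtain ⟨l, rfl⟩ : ∃ l, ℓ = l + 1 := ⟨ℓ - 1, by omega⟩
    have : (Q : ℝ) ≠ 0 := by positivity
    rw [div_pow, one_sub_div this, Nat.add_sub_cancel]
    push_cast [Nat.cast_sub hRQ]
    field_simp
    ring
  calc (rllCount S' ℓ (2 * ℓ) : ℝ)
      ≤ Q ^ (2 * ℓ) * (1 - ℓ * (((R : ℝ) / Q) ^ ℓ * (1 - (R : ℝ) / Q))) := by
        have := (Nat.cast_le (α := ℝ)).2 hcount
        rw [Nat.cast_add, hcast, Nat.cast_pow] at this
        linarith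
    _ ≤ _ := by
        gcongr
        linarith [add_one_le_exp (-(ℓ * (((R : ℝ) / Q) ^ ℓ * (1 - (R : ℝ) / Q))))]

lemma rllCount_le_exp (n : ℕ) (hℓ : 0 < ℓ) (hQ : 0 < Q) (hσ : Fintype.card σ = Q)
    (hS' : #S' = R) :
    (rllCount S' ℓ n : ℝ) ≤
      Q ^ n * exp (-(ℓ * (n / (2 * ℓ) : ℕ) * (((R : ℝ) / Q) ^ ℓ * (1 - (R : ℝ) / Q)))) := by
  set k := n / (2 * ℓ)
  have hsplit := rllCount_mul_add_le (S' := S') (ℓ := ℓ) (2 * ℓ) k (n % (2 * ℓ))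
  rw [Nat.div_add_mod, hσ] at hsplit
  calc (rllCount S' ℓ n : ℝ) ≤ (rllCount S' ℓ (2 * ℓ) : ℝ) ^ k * Q ^ (n % (2 * ℓ)) := by
        exact_mod_cast hsplit
    _ ≤ (Q ^ (2 * ℓ) * exp (-(ℓ * (((R : ℝ) / Q) ^ ℓ * (1 - (R : ℝ) / Q))))) ^ k
          * Q ^ (n % (2 * ℓ)) := by
        gcongr
        exact rllCount_two_mul_le_exp hℓ hQ hσ hS'
    _ = Q ^ (2 * ℓ * k + n % (2 * ℓ)) *
          exp (-(ℓ * k * (((R : ℝ) / Q) ^ ℓ * (1 - (R : ℝ) / Q)))) := by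
        rw [mul_pow, ← exp_nat_mul, pow_add, pow_mul]
        ring_nf
    _ = _ := by rw [Nat.div_add_mod]

end Exponential

end

theorem rll_redundancy_lower_bound_general {σ : Type*} [Fintype σ] (Q R ℓ n : ℕ)
    (hR : 1 ≤ R) (hQR : R < Q) (hℓ : 1 ≤ ℓ)
    (hσ : Fintype.card σ = Q) (S' : Finset σ) (hS' : S'.card = R) :
    (n : ℝ) - Real.logb Q ({x : Fin n → σ | IsRLL S' ℓ x}.ncard) ≥
      Real.logb Q (Real.exp 1) * ((R : ℝ) / Q) ^ ℓ * (1 - (R : ℝ) / Q) *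
        (((n : ℝ) - 2 * ℓ) / 2) := by
  change _ - logb Q (rllCount S' ℓ n) ≥ _
  set p := (R : ℝ) / Q
  set k := n / (2 * ℓ)
  have hQ : (1 : ℝ) < Q := by exact_mod_cast hR.trans_lt hQR
  have hL : 0 < log Q := log_pos hQ
  have hp : 0 ≤ p ^ ℓ * (1 - p) := by
    refine mul_nonneg (by positivity) (sub_nonneg.2 ((div_le_one (by linarith)).2 ?_))
    exact_mod_cast hQR.le
  have hk : ((n : ℝ) - 2 * ℓ) / 2 ≤ ℓ * k := by
    have : (n : ℝ) < k * (2 * ℓ) + 2 * ℓ := by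
      exact_mod_cast Nat.lt_div_mul_add (a := n) (b := 2 * ℓ) (by omega)
    linarith
  obtain ⟨a, -, ha⟩ := exists_mem_notMem_of_card_lt_card (s := S') (t := univ)
    (by rwa [hS', card_univ, hσ])
  have hlog : log (rllCount S' ℓ n) ≤ n * log Q - ℓ * k * (p ^ ℓ * (1 - p)) := by
    calc log (rllCount S' ℓ n) ≤ log (Q ^ n * exp (-(ℓ * k * (p ^ ℓ * (1 - p))))) :=
          log_le_log (by exact_mod_cast rllCount_pos hℓ ha)
            (rllCount_le_exp n hℓ (by omega) hσ hS')
      _ = n * log Q - ℓ * k * (p ^ ℓ * (1 - p)) := by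
          rw [log_mul (pow_pos (by linarith) n).ne' (exp_pos _).ne', log_pow, log_exp]; ring
  calc logb Q (exp 1) * p ^ ℓ * (1 - p) * (((n : ℝ) - 2 * ℓ) / 2)
      = p ^ ℓ * (1 - p) * (((n : ℝ) - 2 * ℓ) / 2) / log Q := by rw [logb, log_exp]; ring
    _ ≤ ℓ * k * (p ^ ℓ * (1 - p)) / log Q :=
        div_le_div_of_nonneg_right (by linarith [mul_le_mul_of_nonneg_left hk hp]) hL.le
    _ ≤ n - log (rllCount S' ℓ n) / log Q := by
        rw [le_sub_iff_add_le, ← add_div, div_le_iff₀ hL]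
        linarith

/-- Lower bound on the redundancy of composite RLL codes. -/
theorem rll_redundancy_lower_bound {σ : Type*} [Fintype σ] (Q R ℓ n : ℕ)
    (hR : 1 ≤ R) (hQR : R < Q) (hℓ : 1 ≤ ℓ) (hn : 2 * ℓ ≤ n)
    (hσ : Fintype.card σ = Q) (S' : Finset σ) (hS' : S'.card = R) :
    (n : ℝ) - Real.logb Q ({x : Fin n → σ | IsRLL S' ℓ x}.ncard) ≥
      Real.logb Q (Real.exp 1) * ((R : ℝ) / Q) ^ ℓ * (1 - (R : ℝ) / Q) *
        (((n : ℝ) - 2 * ℓ) / 2) :=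
  rll_redundancy_lower_bound_general Q R ℓ n hR hQR hℓ hσ S' hS'
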